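/- Fix integers n ≥ 1, m ≥ 1, a finite set 𝒴, N = {1, …, n}, and for every full assignment c : N → {1, …, m} a probability vector p(·|c) : 𝒴 → ℝ (nonnegative and summing to 1). With E_A[H] the expected conditional entropy at coalition A under bottom-up marginalization, the expected conditional entropy is monotone along nested coalitions: for all A ⊆ B ⊆ N, E_A[H] ≥ E_B[H]. -/
import Mathlib


/-- The bottom-up marginalized vector `p(·|c_A) = m^{−(n−|A|)} · Σ_{c extends c_A} p(·|c)`,
the sum running over all full assignments `c : N → {1, …, m}` agreeing with `c_A` on `A`. -/
noncomputable def margin {n m : ℕ} {𝒴 : Type} [Fintype 𝒴]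
    (p : (Fin n → Fin m) → 𝒴 → ℝ) (A : Finset (Fin n))
    (cA : {j // j ∈ A} → Fin m) (y : 𝒴) : ℝ :=
  (1 / (m : ℝ) ^ (n - A.card)) *
    ∑ c ∈ Finset.univ.filter (fun c : Fin n → Fin m => ∀ j : {j // j ∈ A}, c j.1 = cA j),
      p c y

/-- The entropy `H(q) = Σ_{y∈𝒴} negMulLog (q y)` of a vector `q : 𝒴 → ℝ`. -/
noncomputable def entropyVec {𝒴 : Type} [Fintype 𝒴] (q : 𝒴 → ℝ) : ℝ :=
  ∑ y, Real.negMulLog (q y)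

/-- The partial assignment on `A ∪ {k}` extending `c_A` by the value `v` at `k`. -/
def extendAssign {n m : ℕ} {A : Finset (Fin n)} (cA : {j // j ∈ A} → Fin m)
    (k : Fin n) (v : Fin m) : {j // j ∈ insert k A} → Fin m :=
  fun j => if h : j.1 ∈ A then cA ⟨j.1, h⟩ else v

/-- The expected conditional entropy at coalition `A`:
`E_A[H] = m^{−|A|} · Σ_{c_A : A → {1,…,m}} H(p(·|c_A))`. -/
noncomputable def expCondEntropy {n m : ℕ} {𝒴 : Type} [Fintype 𝒴]
    (p : (Fin n → Fin m) → 𝒴 → ℝ) (A : Finset (Fin n)) : ℝ :=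
  (1 / (m : ℝ) ^ A.card) *
    ∑ cA : {j // j ∈ A} → Fin m, entropyVec (margin p A cA)

open Finset

section Aux
variable {n m : ℕ} {𝒴 : Type} [Fintype 𝒴]

lemma margin_nonneg (p : (Fin n → Fin m) → 𝒴 → ℝ) (hp0 : ∀ c y, 0 ≤ p c y)
    (A : Finset (Fin n)) (cA : {j // j ∈ A} → Fin m) (y : 𝒴) :
    0 ≤ margin p A cA y := by
  unfold margin
  apply mul_nonneg (by positivity)
  exact Finset.sum_nonneg fun c _ => hp0 c y

lemma filter_extend (A : Finset (Fin n)) (cA : {j // j ∈ A} → Fin m)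
    {k : Fin n} (hk : k ∉ A) (v : Fin m) :
    (Finset.univ.filter
        (fun c : Fin n → Fin m => ∀ j : {j // j ∈ insert k A}, c j.1 = extendAssign cA k v j)) =
      (Finset.univ.filter
        (fun c : Fin n → Fin m => ∀ j : {j // j ∈ A}, c j.1 = cA j)).filter
        (fun c => c k = v) := by
  ext c
  simp only [mem_filter, mem_univ, true_and]
  constructor
  · intro h
    constructor
    · intro j
      have := h ⟨j.1, mem_insert_of_mem j.2⟩
      simpa [extendAssign, j.2] using this
    · have := h ⟨k, mem_insert_self k A⟩
      simpa [extendAssign, hk] using this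
  · rintro ⟨h1, h2⟩ j
    rcases mem_insert.1 j.2 with hj | hj
    · simp [extendAssign, hj, hk, h2]
    · simpa [extendAssign, hj] using h1 ⟨j.1, hj⟩

lemma card_lt (A : Finset (Fin n)) {k : Fin n} (hk : k ∉ A) : A.card < n := by
  have h1 : (insert k A).card = A.card + 1 := Finset.card_insert_of_notMem hk
  have h2 : (insert k A).card ≤ Fintype.card (Fin n) := Finset.card_le_univ _
  simp only [Fintype.card_fin] at h2
  omega

lemma margin_decomp (hm : 1 ≤ m) (p : (Fin n → Fin m) → 𝒴 → ℝ)
    (A : Finset (Fin n)) (cA : {j // j ∈ A} → Fin m) {k : Fin n} (hk : k ∉ A) :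
    margin p A cA = ∑ v : Fin m, (1 / (m : ℝ)) • margin p (insert k A) (extendAssign cA k v) := by
  have hcard : (insert k A).card = A.card + 1 := Finset.card_insert_of_notMem hk
  have hlt := card_lt A hk
  have hm0 : (m : ℝ) ≠ 0 := by positivity
  funext y
  have hpt : ∀ v : Fin m, margin p (insert k A) (extendAssign cA k v) y
      = (1 / (m : ℝ) ^ (n - (A.card + 1))) *
        ∑ c ∈ (Finset.univ.filter
          (fun c : Fin n → Fin m => ∀ j : {j // j ∈ A}, c j.1 = cA j)).filter
          (fun c => c k = v), p c y := by
    intro v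
    rw [margin, hcard, filter_extend A cA hk]
  have hfib := Finset.sum_fiberwise (Finset.univ.filter
      (fun c : Fin n → Fin m => ∀ j : {j // j ∈ A}, c j.1 = cA j)) (fun c => c k)
      (fun c => p c y)
  rw [Finset.sum_apply]
  simp only [Pi.smul_apply, smul_eq_mul, hpt, ← mul_assoc]
  rw [← Finset.mul_sum, hfib, margin]
  congr 1
  rw [show n - A.card = (n - (A.card + 1)) + 1 from by omega, pow_succ]
  field_simp


lemma entropyVec_concave :
    ConcaveOn ℝ {q : 𝒴 → ℝ | ∀ y, 0 ≤ q y} entropyVec := by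
  constructor
  · intro a ha b hb s t hs ht _ y
    have h1 := ha y; have h2 := hb y
    simp only [Pi.add_apply, Pi.smul_apply, smul_eq_mul]
    positivity
  · intro a ha b hb s t hs ht hst
    simp only [entropyVec, smul_eq_mul, Finset.mul_sum, ← Finset.sum_add_distrib]
    apply Finset.sum_le_sum
    intro y _
    have := Real.concaveOn_negMulLog.2 (ha y) (hb y) hs ht hst
    simpa using this

lemma jensen_step (hm : 1 ≤ m) (p : (Fin n → Fin m) → 𝒴 → ℝ) (hp0 : ∀ c y, 0 ≤ p c y)
    (A : Finset (Fin n)) (cA : {j // j ∈ A} → Fin m) {k : Fin n} (hk : k ∉ A) :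
    ∑ v : Fin m, (1 / (m : ℝ)) * entropyVec (margin p (insert k A) (extendAssign cA k v))
      ≤ entropyVec (margin p A cA) := by
  have hm0 : (0:ℝ) < m := by positivity
  have h := entropyVec_concave.le_map_sum (t := (Finset.univ : Finset (Fin m)))
    (w := fun _ => 1 / (m : ℝ))
    (p := fun v => margin p (insert k A) (extendAssign cA k v))
    (fun _ _ => by positivity)
    (by simp; field_simp)
    (fun v _ => fun y => margin_nonneg p hp0 _ _ y)
  rw [← margin_decomp hm p A cA hk] at h
  simpa using h

lemma step (hm : 1 ≤ m) (p : (Fin n → Fin m) → 𝒴 → ℝ) (hp0 : ∀ c y, 0 ≤ p c y)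
    (A : Finset (Fin n)) {k : Fin n} (hk : k ∉ A) :
    expCondEntropy p A ≥ expCondEntropy p (insert k A) := by
  have hcard : (insert k A).card = A.card + 1 := Finset.card_insert_of_notMem hk
  have hm0 : (0:ℝ) < m := by positivity
  let e : ({j // j ∈ insert k A} → Fin m) ≃ ({j // j ∈ A} → Fin m) × Fin m :=
    { toFun := fun cB => (fun j => cB ⟨j.1, mem_insert_of_mem j.2⟩, cB ⟨k, mem_insert_self k A⟩)
      invFun := fun x => extendAssign x.1 k x.2
      left_inv := by
        intro cB
        funext j
        by_cases h : j.1 ∈ A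
        · simp only [extendAssign, dif_pos h]
        · have hjk : j.1 = k := by
            rcases mem_insert.1 j.2 with h' | h'
            · exact h'
            · exact absurd h' h
          simp only [extendAssign, dif_neg h]
          congr 1
          exact Subtype.ext hjk.symm
      right_inv := by
        rintro ⟨cA, v⟩
        refine Prod.ext ?_ ?_
        · funext j
          simp [extendAssign, j.2]
        · simp [extendAssign, hk] }
  have hsum : ∑ cB : {j // j ∈ insert k A} → Fin m, entropyVec (margin p (insert k A) cB)
      = ∑ cA : {j // j ∈ A} → Fin m, ∑ v : Fin m,
          entropyVec (margin p (insert k A) (extendAssign cA k v)) := by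
    rw [← Equiv.sum_comp e.symm (fun cB => entropyVec (margin p (insert k A) cB)),
      Fintype.sum_prod_type]
    exact Finset.sum_congr rfl fun _ _ => Finset.sum_congr rfl fun _ _ => rfl
  have key : expCondEntropy p (insert k A)
      = (1 / (m : ℝ) ^ A.card) * ∑ cA : {j // j ∈ A} → Fin m, ∑ v : Fin m,
          (1 / (m : ℝ)) * entropyVec (margin p (insert k A) (extendAssign cA k v)) := by
    have pull : ∑ cA : {j // j ∈ A} → Fin m, ∑ v : Fin m,
        (1 / (m : ℝ)) * entropyVec (margin p (insert k A) (extendAssign cA k v))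
        = (1 / (m : ℝ)) * ∑ cA : {j // j ∈ A} → Fin m, ∑ v : Fin m,
          entropyVec (margin p (insert k A) (extendAssign cA k v)) := by
      rw [Finset.mul_sum]
      exact Finset.sum_congr rfl fun _ _ => (Finset.mul_sum _ _ _).symm
    rw [expCondEntropy, hcard, hsum, pull, pow_succ]
    field_simp
  rw [key, expCondEntropy, ge_iff_le]
  apply mul_le_mul_of_nonneg_left _ (by positivity)
  exact Finset.sum_le_sum fun cA _ => jensen_step hm p hp0 A cA hk

end Aux

/-- If every bottom-level vector `p(·|c)` is a probability vector, the
expected conditional entropy is monotone along nested coalitions: for all `A ⊆ B ⊆ N`,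
`E_A[H] ≥ E_B[H]`. -/
theorem stmt10 (n m : ℕ) (hn : 1 ≤ n) (hm : 1 ≤ m)
    {𝒴 : Type} [Fintype 𝒴] (p : (Fin n → Fin m) → 𝒴 → ℝ)
    (hp0 : ∀ c y, 0 ≤ p c y) (hp1 : ∀ c, ∑ y, p c y = 1)
    (A B : Finset (Fin n)) (hAB : A ⊆ B) :
    expCondEntropy p A ≥ expCondEntropy p B := by
  have key : ∀ s A : Finset (Fin n), expCondEntropy p A ≥ expCondEntropy p (A ∪ s) := by
    intro s
    induction s using Finset.induction_on with
    | empty => intro A; simp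
    | @insert a s ha ih =>
      intro A
      rw [Finset.union_insert]
      by_cases h : a ∈ A ∪ s
      · rw [Finset.insert_eq_self.2 h]; exact ih A
      · have h1 := ih A
        have h2 := step hm p hp0 (A ∪ s) h
        linarith
  have := key (B \ A) A
  rwa [Finset.union_sdiff_of_subset hAB] at this
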